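/- Define a_0 = 1 and a_{n+1} = a_n (n+1/6)(n+3/6)(n+5/6)/(n+1)^3. Define v_0 = 1, v_{n+1} = v_n (n+1/12)(n+5/12)/(n+1)^2. Then for all n \ge 0, a_n = \sum_{k=0}^{n} v_k v_{n-k}. -/
import Mathlib

/-- WZ-style telescoping step: the convolution `S n = ∑ v_k v_{n-k}` satisfies the
same first-order recurrence as `a`. -/
lemma clausen_step (v : ℕ → ℚ)
    (hv0 : v 0 = 1)
    (hv : ∀ n : ℕ, v (n + 1) =
      v n * ((n + 1/12) * (n + 5/12)) / ((n : ℚ) + 1) ^ 2) (n : ℕ) :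
    ∑ k ∈ Finset.range (n + 2), v k * v (n + 1 - k)
      = (∑ k ∈ Finset.range (n + 1), v k * v (n - k))
        * (((n : ℚ) + 1/6) * ((n : ℚ) + 3/6) * ((n : ℚ) + 5/6)) / ((n : ℚ) + 1) ^ 3 := by
  set c : ℚ := (((n : ℚ) + 1/6) * ((n : ℚ) + 3/6) * ((n : ℚ) + 5/6)) / ((n : ℚ) + 1) ^ 3
    with hc
  set g : ℕ → ℚ := fun k =>
    ((k : ℚ) ^ 2 * (2 * (k : ℚ) - 3 * ((n : ℚ) + 1)) / ((n : ℚ) + 1) ^ 3)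
      * v k * v (n + 1 - k) with hg
  have hterm : ∀ k ∈ Finset.range (n + 1),
      v k * v (n + 1 - k) - c * (v k * v (n - k)) = g (k + 1) - g k := by
    intro k hk
    rw [Finset.mem_range] at hk
    have hkn : k ≤ n := Nat.lt_succ_iff.mp hk
    obtain ⟨m, rfl⟩ := Nat.exists_eq_add_of_le hkn
    have h1 : k + m + 1 - k = m + 1 := by omega
    have h2 : k + m - k = m := by omega
    have h3 : k + m + 1 - (k + 1) = m := by omega
    simp only [hg, hc, h1, h2, h3]
    rw [hv m, hv k]
    have hk1 : ((k : ℚ) + 1) ≠ 0 := by positivity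
    have hm1 : ((m : ℚ) + 1) ≠ 0 := by positivity
    have hn1 : ((k : ℚ) + (m : ℚ) + 1) ≠ 0 := by positivity
    push_cast
    field_simp
    ring
  have htel : ∑ k ∈ Finset.range (n + 1), (g (k + 1) - g k) = g (n + 1) - g 0 :=
    Finset.sum_range_sub g (n + 1)
  have hsum : ∑ k ∈ Finset.range (n + 1),
      (v k * v (n + 1 - k) - c * (v k * v (n - k))) = g (n + 1) - g 0 := by
    rw [Finset.sum_congr rfl hterm, htel]
  have hg0 : g 0 = 0 := by simp [hg]
  have hn1 : ((n : ℚ) + 1) ≠ 0 := by positivity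
  have hgn : g (n + 1) = -v (n + 1) := by
    have h4 : n + 1 - (n + 1) = 0 := by omega
    simp only [hg, h4, hv0]
    push_cast
    field_simp
    ring
  have hsplit : ∑ k ∈ Finset.range (n + 2), v k * v (n + 1 - k)
      = (∑ k ∈ Finset.range (n + 1), v k * v (n + 1 - k)) + v (n + 1) := by
    rw [Finset.sum_range_succ]
    have h4 : n + 1 - (n + 1) = 0 := by omega
    rw [h4, hv0, mul_one]
  rw [Finset.sum_sub_distrib, ← Finset.mul_sum, hg0, hgn, sub_zero] at hsum
  rw [hsplit, mul_div_assoc, ← hc]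
  have := hsum
  linarith [hsum]

/-- Clausen-type identity for the Taylor coefficients:
if `a₀ = 1`, `a_{n+1} = aₙ (n+1/6)(n+3/6)(n+5/6)/(n+1)³` and
`v₀ = 1`, `v_{n+1} = vₙ (n+1/12)(n+5/12)/(n+1)²`,
then `aₙ = ∑_{k=0}^{n} v_k v_{n-k}`. -/
theorem stmt_9 (a v : ℕ → ℚ)
    (ha0 : a 0 = 1)
    (ha : ∀ n : ℕ, a (n + 1) =
      a n * ((n + 1/6) * (n + 3/6) * (n + 5/6)) / ((n : ℚ) + 1) ^ 3)
    (hv0 : v 0 = 1)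
    (hv : ∀ n : ℕ, v (n + 1) =
      v n * ((n + 1/12) * (n + 5/12)) / ((n : ℚ) + 1) ^ 2) :
    ∀ n : ℕ, a n = ∑ k ∈ Finset.range (n + 1), v k * v (n - k) := by
  intro n
  induction n with
  | zero => simp [ha0, hv0]
  | succ n ih =>
      rw [ha n, ih, ← clausen_step v hv0 hv n]
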